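/- (IPTW change of measure over restricted histories) Under consistency, temporal ordering, SRA, and positivity, for every t with s-1 ≤ t ≤ K, every regimen ā = ā(t-s+1,t), and every bounded function φ of (Ā(t-s), L̄(t+1)): E[ 1{Ā(t-s+1,t)=ā} · φ(Ā(t-s), L̄(t+1)) / ∏_{j=t-s+1}^{t} g(A(j) | Ā(j-1), L̄(j)) ] = E[ φ(Ā(t-s), L̄_{ā}(t+1)) ], where L̄_{ā}(t+1) denotes the counterfactual covariate process under intervention ā on times t-s+1,...,t with earlier treatments left random. -/

import Mathlib

open Finset
open scoped Classical

noncomputable section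

def pr {Ω : Type} [Fintype Ω] (μ : Ω → ℝ) (E : Ω → Prop) : ℝ :=
  ∑ ω, if E ω then μ ω else 0

def cpr {Ω : Type} [Fintype Ω] (μ : Ω → ℝ) (E F : Ω → Prop) : ℝ :=
  pr μ (fun ω => E ω ∧ F ω) / pr μ F

def ex {Ω : Type} [Fintype Ω] (μ : Ω → ℝ) (f : Ω → ℝ) : ℝ :=
  ∑ ω, f ω * μ ω

def cex {Ω : Type} [Fintype Ω] (μ : Ω → ℝ) (f : Ω → ℝ) (F : Ω → Prop) : ℝ :=
  (∑ ω, if F ω then f ω * μ ω else 0) / pr μ F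

/-
The weights are removed one time step at a time. For `r = t-s+1 ≤ m ≤ t+1` consider the integrand
that weights the treatments at times `r, …, m-1` by `1{A(j) = ā(j)} / g(ā(j) | history)` and
evaluates `φ` on the covariates counterfactual under "observed treatments before `m`, `ā` from `m`
on". At `m = t+1` it is the observed IPTW integrand (consistency), at `m = r` the counterfactual
one. Passing from `m+1` to `m` preserves the expectation: the integrand at `m` depends only on
`Ā(m-1)` and the counterfactual process, on whose fibres the history up to `m` is fixed, and by
sequential randomization `g(ā(m) | history)` is exactly the conditional probability of
`A(m) = ā(m)` on each fibre.
-/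

section FiniteProbability

variable {Ω : Type} [Fintype Ω] {μ : Ω → ℝ}

theorem pr_congr {E F : Ω → Prop} (h : ∀ ω, E ω ↔ F ω) : pr μ E = pr μ F :=
  Finset.sum_congr rfl fun ω _ => if_congr (h ω) rfl rfl

theorem pr_eq_sum_filter (E : Ω → Prop) : pr μ E = ∑ ω with E ω, μ ω :=
  (Finset.sum_filter _ _).symm

theorem pr_pos (hμ : ∀ ω, 0 ≤ μ ω) {E : Ω → Prop} {ω₀ : Ω} (h₀ : 0 < μ ω₀) (hE : E ω₀) :
    0 < pr μ E := by
  rw [pr_eq_sum_filter]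
  exact h₀.trans_le <| Finset.single_le_sum (fun ω _ => hμ ω) (by simpa using hE)

theorem pr_and_eq_cpr_mul (E F : Ω → Prop) (h : pr μ F ≠ 0) :
    pr μ (fun ω => E ω ∧ F ω) = cpr μ E F * pr μ F :=
  (div_mul_cancel₀ _ h).symm

theorem sum_eq_sum_of_sum_fiber_eq {β : Type} (κ : Ω → β) {f g : Ω → ℝ}
    (h : ∀ ω₀, ∑ ω with κ ω = κ ω₀, f ω = ∑ ω with κ ω = κ ω₀, g ω) :
    ∑ ω, f ω = ∑ ω, g ω := by
  have hmaps : ∀ ω ∈ (Finset.univ : Finset Ω), κ ω ∈ Finset.univ.image κ :=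
    fun ω _ => Finset.mem_image_of_mem κ (Finset.mem_univ ω)
  rw [← Finset.sum_fiberwise_of_maps_to hmaps, ← Finset.sum_fiberwise_of_maps_to hmaps]
  refine Finset.sum_congr rfl fun v hv => ?_
  obtain ⟨ω₀, -, rfl⟩ := Finset.mem_image.1 hv
  exact h ω₀

theorem ex_ite_div_eq_ex {β : Type} (κ : Ω → β) (E : Ω → Prop) (G c : Ω → ℝ)
    (hG : ∀ ω ω', κ ω = κ ω' → G ω = G ω') (hc : ∀ ω ω', κ ω = κ ω' → c ω = c ω')
    (hfac : ∀ ω₀, μ ω₀ ≠ 0 → c ω₀ ≠ 0 ∧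
      pr μ (fun ω => E ω ∧ κ ω = κ ω₀) = c ω₀ * pr μ (fun ω => κ ω = κ ω₀)) :
    ex μ (fun ω => (if E ω then G ω else 0) / c ω) = ex μ G := by
  refine sum_eq_sum_of_sum_fiber_eq κ fun ω₀ => ?_
  by_cases hnull : ∀ ω, κ ω = κ ω₀ → μ ω = 0
  · rw [Finset.sum_eq_zero, Finset.sum_eq_zero] <;>
      intro ω hω <;> simp [hnull ω (Finset.mem_filter.1 hω).2]
  push Not at hnull
  obtain ⟨ω₁, hκ, hμ₁⟩ := hnull
  obtain ⟨hc₁, hfac₁⟩ := hfac ω₁ hμ₁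
  rw [← hκ]
  calc ∑ ω with κ ω = κ ω₁, (if E ω then G ω else 0) / c ω * μ ω
      = ∑ ω with κ ω = κ ω₁, G ω₁ / c ω₁ * (if E ω then μ ω else 0) := by
        refine Finset.sum_congr rfl fun ω hω => ?_
        have hω := (Finset.mem_filter.1 hω).2
        rw [hG ω ω₁ hω, hc ω ω₁ hω]
        split_ifs <;> ring
    _ = G ω₁ / c ω₁ * pr μ (fun ω => E ω ∧ κ ω = κ ω₁) := by
        rw [← Finset.mul_sum, Finset.sum_filter, pr]
        exact congrArg _ (Finset.sum_congr rfl fun ω _ => by split_ifs <;> simp_all)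
    _ = ∑ ω with κ ω = κ ω₁, G ω * μ ω := by
        rw [hfac₁, pr_eq_sum_filter, Finset.mul_sum, Finset.mul_sum]
        refine Finset.sum_congr rfl fun ω hω => ?_
        rw [hG ω ω₁ (Finset.mem_filter.1 hω).2]
        field_simp

end FiniteProbability

section CausalModel

variable {Ω 𝒜 ℒ : Type}

/-- `CL a j ω` is the counterfactual covariate `L_a(j)` under the treatment sequence `a`. -/
def IsTemporallyOrdered (CL : (ℕ → 𝒜) → ℕ → Ω → ℒ) : Prop :=
  ∀ (a a' : ℕ → 𝒜) (j : ℕ), (∀ i < j, a i = a' i) → ∀ ω, CL a j ω = CL a' j ω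

def IsConsistent (A : ℕ → Ω → 𝒜) (L : ℕ → Ω → ℒ) (CL : (ℕ → 𝒜) → ℕ → Ω → ℒ) : Prop :=
  ∀ j ω, L j ω = CL (fun i => A i ω) j ω

def sameHistory (A : ℕ → Ω → 𝒜) (L : ℕ → Ω → ℒ) (j : ℕ) (ω : Ω) : Ω → Prop :=
  fun ω' => (∀ i < j, A i ω' = A i ω) ∧ (∀ i ≤ j, L i ω' = L i ω)

/-- The treatment mechanism `g(a | Ā(j-1), L̄(j))` evaluated along the history of `ω`. -/
def propensity [Fintype Ω] (μ : Ω → ℝ) (A : ℕ → Ω → 𝒜) (L : ℕ → Ω → ℒ) (j : ℕ) (a : 𝒜) (ω : Ω) :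
    ℝ :=
  cpr μ (fun ω' => A j ω' = a) (sameHistory A L j ω)

/-- Given any history, `A(j)` is independent of the whole counterfactual process. -/
def SequentialRandomizationAt [Fintype Ω] (μ : Ω → ℝ) (A : ℕ → Ω → 𝒜) (L : ℕ → Ω → ℒ)
    (CL : (ℕ → 𝒜) → ℕ → Ω → ℒ) (j : ℕ) : Prop :=
  ∀ (a : 𝒜) (x : (ℕ → 𝒜) → ℕ → ℒ) (ab : ℕ → 𝒜) (lb : ℕ → ℒ),
    pr μ (fun ω => (∀ i < j, A i ω = ab i) ∧ (∀ i ≤ j, L i ω = lb i)) > 0 →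
    cpr μ (fun ω => A j ω = a ∧ ∀ (ar : ℕ → 𝒜) (jj : ℕ), CL ar jj ω = x ar jj)
      (fun ω => (∀ i < j, A i ω = ab i) ∧ (∀ i ≤ j, L i ω = lb i)) =
    cpr μ (fun ω => A j ω = a)
      (fun ω => (∀ i < j, A i ω = ab i) ∧ (∀ i ≤ j, L i ω = lb i)) *
    cpr μ (fun ω => ∀ (ar : ℕ → 𝒜) (jj : ℕ), CL ar jj ω = x ar jj)
      (fun ω => (∀ i < j, A i ω = ab i) ∧ (∀ i ≤ j, L i ω = lb i))

variable {A : ℕ → Ω → 𝒜} {L : ℕ → Ω → ℒ} {CL : (ℕ → 𝒜) → ℕ → Ω → ℒ}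

theorem sameHistory.mono {j m : ℕ} {ω ω' : Ω} (h : sameHistory A L m ω ω') (hjm : j ≤ m) :
    sameHistory A L j ω ω' :=
  ⟨fun i hi => h.1 i (hi.trans_le hjm), fun i hi => h.2 i (hi.trans hjm)⟩

theorem sameHistory_of_eq (hTO : IsTemporallyOrdered CL) (hcons : IsConsistent A L CL)
    {m : ℕ} {ω ω' : Ω} (hA : ∀ i < m, A i ω' = A i ω)
    (hCL : ∀ (ar : ℕ → 𝒜) (jj : ℕ), CL ar jj ω' = CL ar jj ω) :
    sameHistory A L m ω ω' := by
  refine ⟨hA, fun i hi => ?_⟩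
  rw [hcons, hcons, hTO _ _ i (fun i' hi' => hA i' (hi'.trans_le hi)), hCL]

variable [Fintype Ω] {μ : Ω → ℝ}

theorem propensity_congr {j : ℕ} {a : 𝒜} {ω ω' : Ω} (h : sameHistory A L j ω ω') :
    propensity μ A L j a ω' = propensity μ A L j a ω := by
  refine congrArg (cpr μ _) (funext fun ω'' => propext ?_)
  exact ⟨fun h' => ⟨fun i hi => (h'.1 i hi).trans (h.1 i hi),
      fun i hi => (h'.2 i hi).trans (h.2 i hi)⟩,
    fun h' => ⟨fun i hi => (h'.1 i hi).trans (h.1 i hi).symm,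
      fun i hi => (h'.2 i hi).trans (h.2 i hi).symm⟩⟩

/-- On a fibre of `(Ā(m-1), counterfactual process)` the history `(Ā(m-1), L̄(m))` is constant, and
sequential randomization makes the propensity the conditional probability of `A(m) = a` there. -/
theorem ex_ite_div_propensity (hμ : ∀ ω, 0 ≤ μ ω) (hTO : IsTemporallyOrdered CL)
    (hcons : IsConsistent A L CL) {m : ℕ} {a : 𝒜}
    (hSRA : SequentialRandomizationAt μ A L CL m)
    (hpos : ∀ ω, 0 < μ ω → 0 < propensity μ A L m a ω) (G : Ω → ℝ)
    (hG : ∀ ω ω', (∀ i < m, A i ω = A i ω') →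
      (∀ (ar : ℕ → 𝒜) (jj : ℕ), CL ar jj ω = CL ar jj ω') → G ω = G ω') :
    ex μ (fun ω => (if A m ω = a then G ω else 0) / propensity μ A L m a ω) = ex μ G := by
  set κ : Ω → (Fin m → 𝒜) × ((ℕ → 𝒜) → ℕ → ℒ) :=
    fun ω => (fun i => A i ω, fun ar jj => CL ar jj ω)
  have hκ : ∀ ω ω', κ ω = κ ω' ↔
      (∀ i < m, A i ω = A i ω') ∧ ∀ (ar : ℕ → 𝒜) (jj : ℕ), CL ar jj ω = CL ar jj ω' := by
    simp [κ, Prod.ext_iff, funext_iff, Fin.forall_iff]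
  have hfibre : ∀ ω ω₀, κ ω = κ ω₀ ↔
      (∀ (ar : ℕ → 𝒜) (jj : ℕ), CL ar jj ω = CL ar jj ω₀) ∧ sameHistory A L m ω₀ ω := by
    refine fun ω ω₀ => (hκ ω ω₀).trans ⟨fun h => ⟨h.2, sameHistory_of_eq hTO hcons h.1 h.2⟩,
      fun h => ⟨h.2.1, h.1⟩⟩
  refine ex_ite_div_eq_ex κ _ G _ (fun ω ω' h => hG ω ω' ((hκ ω ω').1 h).1 ((hκ ω ω').1 h).2)
    (fun ω ω' h => propensity_congr ((hfibre ω ω').1 h).2) fun ω₀ hμ₀ => ?_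
  have hμ₀ : 0 < μ ω₀ := (hμ ω₀).lt_of_ne' hμ₀
  have hH : 0 < pr μ (sameHistory A L m ω₀) := pr_pos hμ hμ₀ ⟨fun _ _ => rfl, fun _ _ => rfl⟩
  refine ⟨(hpos ω₀ hμ₀).ne', ?_⟩
  have hindep : cpr μ (fun ω => A m ω = a ∧ ∀ (ar : ℕ → 𝒜) (jj : ℕ), CL ar jj ω = CL ar jj ω₀)
        (sameHistory A L m ω₀) =
      propensity μ A L m a ω₀ *
        cpr μ (fun ω => ∀ (ar : ℕ → 𝒜) (jj : ℕ), CL ar jj ω = CL ar jj ω₀) (sameHistory A L m ω₀) :=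
    hSRA a _ _ _ hH
  rw [pr_congr fun ω => (and_congr_right' (hfibre ω ω₀)).trans and_assoc.symm,
    pr_congr (hfibre · ω₀), pr_and_eq_cpr_mul _ _ hH.ne', pr_and_eq_cpr_mul _ _ hH.ne', hindep,
    mul_assoc]

end CausalModel

section Weighting

variable {Ω 𝒜 ℒ : Type}

def splice (m : ℕ) (a b : ℕ → 𝒜) : ℕ → 𝒜 := fun i => if i < m then a i else b i

theorem splice_succ {m : ℕ} {a b : ℕ → 𝒜} (h : a m = b m) : splice (m + 1) a b = splice m a b := by
  funext i
  rcases lt_trichotomy i m with hi | rfl | hi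
  · simp [splice, hi, hi.trans (Nat.lt_succ_self m)]
  · simp [splice, h]
  · simp [splice, hi.not_gt, (Nat.succ_le_of_lt hi).not_gt]

theorem splice_congr {m : ℕ} {a a' b : ℕ → 𝒜} (h : ∀ i < m, a i = a' i) :
    splice m a b = splice m a' b :=
  funext fun i => by by_cases hi : i < m <;> simp [splice, hi, h]

theorem splice_eq_of_lt {m i : ℕ} {a b : ℕ → 𝒜} (hi : i < m) : splice m a b i = a i :=
  if_pos hi

variable [Fintype Ω] (μ : Ω → ℝ) (A : ℕ → Ω → 𝒜) (L : ℕ → Ω → ℒ) (CL : (ℕ → 𝒜) → ℕ → Ω → ℒ)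
  (φ : (ℕ → 𝒜) → (ℕ → ℒ) → ℝ) (ab : ℕ → 𝒜)

def ipwIntegrand (r m : ℕ) (ω : Ω) : ℝ :=
  (if ∀ j ∈ Ico r m, A j ω = ab j then 1 else 0) *
    φ (fun i => A i ω) (fun i => CL (splice m (fun i => A i ω) ab) i ω) /
    ∏ j ∈ Ico r m, propensity μ A L j (ab j) ω

variable {μ A L CL φ ab}

theorem ipwIntegrand_self (r : ℕ) (ω : Ω) :
    ipwIntegrand μ A L CL φ ab r r ω =
      φ (fun i => A i ω) (fun i => CL (splice r (fun i => A i ω) ab) i ω) := by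
  simp [ipwIntegrand]

theorem ipwIntegrand_succ {r m : ℕ} (hrm : r ≤ m) (ω : Ω) :
    ipwIntegrand μ A L CL φ ab r (m + 1) ω =
      (if A m ω = ab m then ipwIntegrand μ A L CL φ ab r m ω else 0) /
        propensity μ A L m (ab m) ω := by
  rw [ipwIntegrand, ipwIntegrand, Nat.Ico_succ_right_eq_insert_Ico hrm,
    Finset.prod_insert Finset.right_notMem_Ico]
  by_cases hAm : A m ω = ab m
  · rw [splice_succ (a := fun i => A i ω) hAm, if_pos hAm, div_div,
      mul_comm (propensity μ A L m (ab m) ω)]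
    simp only [Finset.forall_mem_insert, hAm, true_and]
  · simp [hAm]

theorem ipwIntegrand_congr (hTO : IsTemporallyOrdered CL) (hcons : IsConsistent A L CL)
    {r m : ℕ} (hrm : r ≤ m) (hφ : ∀ a a' l, (∀ i < r, a i = a' i) → φ a l = φ a' l)
    {ω ω' : Ω} (hA : ∀ i < m, A i ω = A i ω')
    (hCL : ∀ (ar : ℕ → 𝒜) (jj : ℕ), CL ar jj ω = CL ar jj ω') :
    ipwIntegrand μ A L CL φ ab r m ω = ipwIntegrand μ A L CL φ ab r m ω' := by
  have hhist : sameHistory A L m ω' ω := sameHistory_of_eq hTO hcons hA hCL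
  have hind : (∀ j ∈ Ico r m, A j ω = ab j) ↔ ∀ j ∈ Ico r m, A j ω' = ab j :=
    forall₂_congr fun j hj => by rw [hA j (Finset.mem_Ico.1 hj).2]
  have hprod : ∏ j ∈ Ico r m, propensity μ A L j (ab j) ω =
      ∏ j ∈ Ico r m, propensity μ A L j (ab j) ω' :=
    Finset.prod_congr rfl fun j hj =>
      propensity_congr (hhist.mono (Finset.mem_Ico.1 hj).2.le)
  rw [ipwIntegrand, ipwIntegrand, if_congr hind rfl rfl, hprod, splice_congr hA,
    hφ _ _ _ fun i hi => hA i (hi.trans_le hrm)]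
  simp only [hCL]

theorem ex_ipwIntegrand_succ (hμ : ∀ ω, 0 ≤ μ ω) (hTO : IsTemporallyOrdered CL)
    (hcons : IsConsistent A L CL) {r m : ℕ} (hrm : r ≤ m)
    (hφ : ∀ a a' l, (∀ i < r, a i = a' i) → φ a l = φ a' l)
    (hSRA : SequentialRandomizationAt μ A L CL m)
    (hpos : ∀ ω, 0 < μ ω → 0 < propensity μ A L m (ab m) ω) :
    ex μ (ipwIntegrand μ A L CL φ ab r (m + 1)) = ex μ (ipwIntegrand μ A L CL φ ab r m) := by
  simp only [funext (ipwIntegrand_succ hrm)]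
  exact ex_ite_div_propensity hμ hTO hcons hSRA hpos _
    fun ω ω' => ipwIntegrand_congr hTO hcons hrm hφ

theorem ex_ipwIntegrand_eq_self (hμ : ∀ ω, 0 ≤ μ ω) (hTO : IsTemporallyOrdered CL)
    (hcons : IsConsistent A L CL) {r m : ℕ} (hrm : r ≤ m)
    (hφ : ∀ a a' l, (∀ i < r, a i = a' i) → φ a l = φ a' l)
    (hSRA : ∀ j, r ≤ j → j < m → SequentialRandomizationAt μ A L CL j)
    (hpos : ∀ j, r ≤ j → j < m → ∀ ω, 0 < μ ω → 0 < propensity μ A L j (ab j) ω) :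
    ex μ (ipwIntegrand μ A L CL φ ab r m) = ex μ (ipwIntegrand μ A L CL φ ab r r) := by
  induction m, hrm using Nat.le_induction with
  | base => rfl
  | succ m hrm ih =>
    rw [ex_ipwIntegrand_succ hμ hTO hcons hrm hφ (hSRA m hrm m.lt_succ_self)
        (hpos m hrm m.lt_succ_self),
      ih (fun j hj hjm => hSRA j hj (hjm.trans m.lt_succ_self))
        (fun j hj hjm => hpos j hj (hjm.trans m.lt_succ_self))]

end Weighting

theorem iptw_weight_eq_ipwIntegrand {Ω 𝒜 ℒ : Type} [Fintype Ω] {μ : Ω → ℝ} {A : ℕ → Ω → 𝒜}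
    {L : ℕ → Ω → ℒ} {CL : (ℕ → 𝒜) → ℕ → Ω → ℒ} {φ : (ℕ → 𝒜) → (ℕ → ℒ) → ℝ} {ab : ℕ → 𝒜}
    (hTO : IsTemporallyOrdered CL) (hcons : IsConsistent A L CL) {r t : ℕ}
    (hφ : ∀ a l l', (∀ i ≤ t + 1, l i = l' i) → φ a l = φ a l') (ω : Ω) :
    (if ∀ j, r ≤ j → j ≤ t → A j ω = ab j then (1 : ℝ) else 0) *
        φ (fun i => A i ω) (fun i => L i ω) / ∏ j ∈ Ico r (t + 1), propensity μ A L j (A j ω) ω =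
      ipwIntegrand μ A L CL φ ab r (t + 1) ω := by
  have hind : (∀ j, r ≤ j → j ≤ t → A j ω = ab j) ↔ ∀ j ∈ Ico r (t + 1), A j ω = ab j := by
    simp only [Finset.mem_Ico, Nat.lt_succ_iff, and_imp]
  rw [ipwIntegrand]
  by_cases htreated : ∀ j ∈ Ico r (t + 1), A j ω = ab j
  · have hL : ∀ i ≤ t + 1, L i ω = CL (splice (t + 1) (fun i => A i ω) ab) i ω := fun i hi => by
      rw [hcons]
      exact hTO (fun i => A i ω) (splice (t + 1) (fun i => A i ω) ab) i
        (fun i' hi' => (splice_eq_of_lt (a := fun i => A i ω) (hi'.trans_le hi)).symm) ω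
    rw [if_pos (hind.2 htreated), if_pos htreated, hφ _ _ _ hL,
      Finset.prod_congr rfl fun j hj => by rw [htreated j hj]]
  · rw [if_neg (mt hind.1 htreated), if_neg htreated, zero_mul, zero_div, zero_mul, zero_div]

theorem iptw_change_of_measure_general
    {Ω 𝒜 ℒ : Type} [Fintype Ω]
    (μ : Ω → ℝ) (hμ : ∀ ω, 0 ≤ μ ω)
    (K s : ℕ)
    (A : ℕ → Ω → 𝒜) (CL : (ℕ → 𝒜) → ℕ → Ω → ℒ) (L : ℕ → Ω → ℒ)
    (hTO : ∀ (a a' : ℕ → 𝒜) (j : ℕ), (∀ i < j, a i = a' i) → ∀ ω, CL a j ω = CL a' j ω)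
    (hcons : ∀ j ω, L j ω = CL (fun i => A i ω) j ω)
    (SRA : ∀ j ≤ K, ∀ (a : 𝒜) (x : (ℕ → 𝒜) → ℕ → ℒ) (ab : ℕ → 𝒜) (lb : ℕ → ℒ),
      pr μ (fun ω => (∀ i < j, A i ω = ab i) ∧ (∀ i ≤ j, L i ω = lb i)) > 0 →
      cpr μ (fun ω => A j ω = a ∧ ∀ (ar : ℕ → 𝒜) (jj : ℕ), CL ar jj ω = x ar jj)
        (fun ω => (∀ i < j, A i ω = ab i) ∧ (∀ i ≤ j, L i ω = lb i)) =
      cpr μ (fun ω => A j ω = a)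
        (fun ω => (∀ i < j, A i ω = ab i) ∧ (∀ i ≤ j, L i ω = lb i)) *
      cpr μ (fun ω => ∀ (ar : ℕ → 𝒜) (jj : ℕ), CL ar jj ω = x ar jj)
        (fun ω => (∀ i < j, A i ω = ab i) ∧ (∀ i ≤ j, L i ω = lb i)))
    (t : ℕ) (ht2 : t ≤ K) (ab : ℕ → 𝒜)
    (POS : ∀ j, t + 1 - s ≤ j → j ≤ t → ∀ (a : 𝒜) (ω : Ω), μ ω > 0 →
      cpr μ (fun ω' => A j ω' = a)
        (fun ω' => (∀ i < j, A i ω' = A i ω) ∧ (∀ i ≤ j, L i ω' = L i ω)) > 0)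
    (φ : (ℕ → 𝒜) → (ℕ → ℒ) → ℝ)
    (hφ : ∀ (a a' : ℕ → 𝒜) (l l' : ℕ → ℒ), (∀ i < t + 1 - s, a i = a' i) →
      (∀ i ≤ t + 1, l i = l' i) → φ a l = φ a' l') :
    ex μ (fun ω =>
      (if ∀ j, t + 1 - s ≤ j → j ≤ t → A j ω = ab j then (1 : ℝ) else 0) *
      φ (fun i => A i ω) (fun i => L i ω) /
      ∏ j ∈ Finset.Ico (t + 1 - s) (t + 1),
        cpr μ (fun ω' => A j ω' = A j ω)
          (fun ω' => (∀ i < j, A i ω' = A i ω) ∧ (∀ i ≤ j, L i ω' = L i ω))) =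
    ex μ (fun ω => φ (fun i => A i ω)
      (fun i => CL (fun i' => if i' < t + 1 - s then A i' ω else ab i') i ω)) := by
  calc _ = ex μ (ipwIntegrand μ A L CL φ ab (t + 1 - s) (t + 1)) :=
        congrArg (ex μ) <| funext <|
          iptw_weight_eq_ipwIntegrand hTO hcons fun a l l' => hφ a a l l' fun _ _ => rfl
    _ = ex μ (ipwIntegrand μ A L CL φ ab (t + 1 - s) (t + 1 - s)) :=
        ex_ipwIntegrand_eq_self hμ hTO hcons (Nat.sub_le _ _)
          (fun a a' l ha => hφ a a' l l ha fun _ _ => rfl)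
          (fun j _ hj => SRA j ((Nat.lt_succ_iff.1 hj).trans ht2))
          (fun j hj hjt => POS j hj (Nat.lt_succ_iff.1 hjt) (ab j))
    _ = _ := congrArg (ex μ) <| funext <| ipwIntegrand_self _

/-- IPTW change of measure over restricted histories: inverse
probability weighting by the restricted treatment mechanism recovers the
counterfactual distribution under intervention `ā(t-s+1,t)` with earlier
treatments left random. -/
theorem iptw_change_of_measure
    {Ω 𝒜 ℒ : Type} [Fintype Ω]
    (μ : Ω → ℝ) (hμ : ∀ ω, 0 ≤ μ ω) (hsum : ∑ ω, μ ω = 1)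
    (K s : ℕ) (hs : 1 ≤ s) (hsK : s ≤ K + 1)
    (A : ℕ → Ω → 𝒜) (CL : (ℕ → 𝒜) → ℕ → Ω → ℒ) (L : ℕ → Ω → ℒ)
    (hTO : ∀ (a a' : ℕ → 𝒜) (j : ℕ), (∀ i < j, a i = a' i) → ∀ ω, CL a j ω = CL a' j ω)
    (hcons : ∀ j ω, L j ω = CL (fun i => A i ω) j ω)
    (SRA : ∀ j ≤ K, ∀ (a : 𝒜) (x : (ℕ → 𝒜) → ℕ → ℒ) (ab : ℕ → 𝒜) (lb : ℕ → ℒ),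
      pr μ (fun ω => (∀ i < j, A i ω = ab i) ∧ (∀ i ≤ j, L i ω = lb i)) > 0 →
      cpr μ (fun ω => A j ω = a ∧ ∀ (ar : ℕ → 𝒜) (jj : ℕ), CL ar jj ω = x ar jj)
        (fun ω => (∀ i < j, A i ω = ab i) ∧ (∀ i ≤ j, L i ω = lb i)) =
      cpr μ (fun ω => A j ω = a)
        (fun ω => (∀ i < j, A i ω = ab i) ∧ (∀ i ≤ j, L i ω = lb i)) *
      cpr μ (fun ω => ∀ (ar : ℕ → 𝒜) (jj : ℕ), CL ar jj ω = x ar jj)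
        (fun ω => (∀ i < j, A i ω = ab i) ∧ (∀ i ≤ j, L i ω = lb i)))
    (t : ℕ) (ht1 : s - 1 ≤ t) (ht2 : t ≤ K) (ab : ℕ → 𝒜)
    (POS : ∀ j, t + 1 - s ≤ j → j ≤ t → ∀ (a : 𝒜) (ω : Ω), μ ω > 0 →
      cpr μ (fun ω' => A j ω' = a)
        (fun ω' => (∀ i < j, A i ω' = A i ω) ∧ (∀ i ≤ j, L i ω' = L i ω)) > 0)
    (φ : (ℕ → 𝒜) → (ℕ → ℒ) → ℝ)
    (hφ : ∀ (a a' : ℕ → 𝒜) (l l' : ℕ → ℒ), (∀ i < t + 1 - s, a i = a' i) →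
      (∀ i ≤ t + 1, l i = l' i) → φ a l = φ a' l') :
    ex μ (fun ω =>
      (if ∀ j, t + 1 - s ≤ j → j ≤ t → A j ω = ab j then (1 : ℝ) else 0) *
      φ (fun i => A i ω) (fun i => L i ω) /
      ∏ j ∈ Finset.Ico (t + 1 - s) (t + 1),
        cpr μ (fun ω' => A j ω' = A j ω)
          (fun ω' => (∀ i < j, A i ω' = A i ω) ∧ (∀ i ≤ j, L i ω' = L i ω))) =
    ex μ (fun ω => φ (fun i => A i ω)
      (fun i => CL (fun i' => if i' < t + 1 - s then A i' ω else ab i') i ω)) :=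
  iptw_change_of_measure_general μ hμ K s A CL L hTO hcons SRA t ht2 ab POS φ hφ
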